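/- The distribution of the step-up rejection number for i.i.d. p-values: if p₁,...,pₘ are i.i.d. with continuous increasing c.d.f. G and t is a nondecreasing threshold, then for 0 ≤ k ≤ m, P(|SU(t)| = k) = C(m,k)(G(tₖ))^k Ψ_{m−k}(1−G(tₘ), 1−G(t_{m−1}), ..., 1−G(t_{k+1})), where Ψⱼ is the joint c.d.f. of order statistics of j i.i.d. uniform variables (with (G(t₀))⁰ = 1 when k = 0). -/

import Mathlib

open MeasureTheory Finset
open scoped Classical

noncomputable def unifM : Measure ℝ := volume.restrict (Set.Ioo (0:ℝ) 1)

noncomputable def iidUnif (k : ℕ) : Measure (Fin k → ℝ) := Measure.pi fun _ => unifM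

/-- `Psi k t` is the probability that the order statistics `U_(1) ≤ ... ≤ U_(k)` of
`k` i.i.d. uniform variables on `(0,1)` satisfy `U_(j) ≤ t j` for all `1 ≤ j ≤ k`
(1-indexed thresholds), expressed via the counting characterization
`U_(j) ≤ s ↔ #{i : U i ≤ s} ≥ j`. By convention `Psi 0 t = 1`. -/
noncomputable def Psi (k : ℕ) (t : ℕ → ℝ) : ℝ :=
  (iidUnif k {x | ∀ j ∈ Finset.Icc 1 k,
    j ≤ (Finset.univ.filter (fun i : Fin k => x i ≤ t j)).card}).toReal

/-- Rejection number of the step-up procedure with threshold `t` (1-indexed, `t 0 = 0`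
by convention) applied to the `p`-values `p : Fin m → ℝ`:
the largest `k ≤ m` such that at least `k` of the `p`-values are `≤ t k`. -/
noncomputable def kSUf (m : ℕ) (t : ℕ → ℝ) (p : Fin m → ℝ) : ℕ :=
  Nat.findGreatest (fun k => k ≤ (Finset.univ.filter (fun i : Fin m => p i ≤ t k)).card) m

/-- The set of hypotheses rejected by the step-up procedure. -/
noncomputable def rejSUf (m : ℕ) (t : ℕ → ℝ) (p : Fin m → ℝ) : Finset (Fin m) :=
  Finset.univ.filter (fun i => p i ≤ t (kSUf m t p))

/-- Rejection number of the step-down procedure with threshold `t` applied to `p`: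
the largest `k ≤ m` such that for all `k' ≤ k` at least `k'` of the `p`-values are `≤ t k'`. -/
noncomputable def kSDf (m : ℕ) (t : ℕ → ℝ) (p : Fin m → ℝ) : ℕ :=
  Nat.findGreatest
    (fun k => ∀ k' ∈ Finset.Icc 1 k,
      k' ≤ (Finset.univ.filter (fun i : Fin m => p i ≤ t k')).card) m

/-- The set of hypotheses rejected by the step-down procedure. -/
noncomputable def rejSDf (m : ℕ) (t : ℕ → ℝ) (p : Fin m → ℝ) : Finset (Fin m) :=
  Finset.univ.filter (fun i => p i ≤ t (kSDf m t p))


/-! On the event `kSUf m t x = k` exactly `k` of the p-values lie below `t k`, and the other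
`m - k` satisfy `#{i | x i ≤ t j} + k < j` for all `k < j ≤ m`. Splitting according to the set
`S` of the `k` small p-values, independence factors the probability into `G (t k) ^ k` times the
probability of that condition on the remaining `m - k` coordinates, the same for each of the
`C(m, k)` choices of `S`. Finally `x ↦ 1 - G x` carries `μG` to the uniform law and turns
`t j < x` into `1 - G x ≤ 1 - G (t j)` almost surely, so after reversing the thresholds the
condition becomes the order-statistics event defining `Psi`. -/

open ProbabilityTheory

lemma card_filter_le_mono {ι : Type*} [Fintype ι] (x : ι → ℝ) {a b : ℝ} (hab : a ≤ b) :
    #{i | x i ≤ a} ≤ #{i | x i ≤ b} :=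
  card_le_card fun i hi => mem_filter.2 ⟨mem_univ i, (mem_filter.1 hi).2.trans hab⟩

lemma measurable_card_filter_le {ι : Type*} [Fintype ι] (a : ℝ) :
    Measurable fun x : ι → ℝ => #{i | x i ≤ a} := by
  simp_rw [card_filter]
  exact Finset.measurable_sum _ fun i _ =>
    Measurable.ite (measurableSet_le (measurable_pi_apply i) measurable_const)
      measurable_const measurable_const

lemma measurableSet_forall_card_filter_le {ι : Type*} [Fintype ι] (a : ℕ → ℝ)
    (P : ℕ → ℕ → Prop) : MeasurableSet {x : ι → ℝ | ∀ j, P j #{i | x i ≤ a j}} := by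
  rw [Set.ofPred_forall]
  exact MeasurableSet.iInter fun j =>
    measurable_card_filter_le (a j) (Set.to_countable {n | P j n}).measurableSet

section StepUp

variable {m k : ℕ} {t : ℕ → ℝ}

lemma kSUf_eq_iff (hkm : k ≤ m) (ht : MonotoneOn t (Set.Icc k m)) (x : Fin m → ℝ) :
    kSUf m t x = k ↔ #{i | x i ≤ t k} = k ∧ ∀ j, k < j → j ≤ m → #{i | x i ≤ t j} < j := by
  simp only [kSUf, Nat.findGreatest_eq_iff, not_le]
  constructor
  · rintro ⟨-, hk, htail⟩
    refine ⟨le_antisymm ?_ ?_, fun j hkj hjm => htail hkj hjm⟩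
    · rcases hkm.lt_or_eq with hkm | rfl
      · have htk : t k ≤ t (k + 1) := ht ⟨le_rfl, hkm.le⟩ ⟨k.le_succ, hkm⟩ k.le_succ
        exact Nat.lt_succ_iff.1 ((card_filter_le_mono x htk).trans_lt (htail k.lt_succ_self hkm))
      · exact (card_filter_le _ _).trans_eq (card_fin k)
    · rcases Nat.eq_zero_or_pos k with rfl | hk0
      · exact Nat.zero_le _
      · exact hk hk0.ne'
  · rintro ⟨hk, htail⟩
    exact ⟨hkm, fun _ => hk.ge, fun j hkj hjm => htail j hkj hjm⟩

lemma monotoneOn_Icc_zero (ht : MonotoneOn t (Set.Icc 1 m))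
    (h0 : ∀ j ∈ Set.Icc 1 m, t 0 ≤ t j) : MonotoneOn t (Set.Icc 0 m) := by
  intro a ha b hb hab
  rcases Nat.eq_zero_or_pos a with rfl | ha0
  · rcases Nat.eq_zero_or_pos b with rfl | hb0
    · exact le_rfl
    · exact h0 b ⟨hb0, hb.2⟩
  · exact ht ⟨ha0, ha.2⟩ ⟨ha0.trans_le hab, hb.2⟩ hab

lemma card_rejSUf (ht : MonotoneOn t (Set.Icc 0 m)) (x : Fin m → ℝ) :
    #(rejSUf m t x) = kSUf m t x :=
  ((kSUf_eq_iff (Nat.findGreatest_le m) (ht.mono (Set.Icc_subset_Icc (Nat.zero_le _) le_rfl)) x).1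
    rfl).1

end StepUp

lemma card_filter_subtype {α : Type*} [Fintype α] (q P : α → Prop) [DecidablePred q]
    [DecidablePred P] : #{i : {i // q i} | P i} = #{i | q i ∧ P i} := by
  rw [← Fintype.card_subtype, ← Fintype.card_subtype]
  exact Fintype.card_congr (Equiv.subtypeSubtypeEquivSubtypeInter q P)

lemma card_filter_le_eq_card_add {ι : Type*} [Fintype ι] [DecidableEq ι] {x : ι → ℝ}
    {S : Finset ι} {a : ℝ} (hS : ∀ i ∈ S, x i ≤ a) :
    #{i | x i ≤ a} = #S + #{i : {i // i ∉ S} | x i ≤ a} := by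
  have hsplit : ({i | x i ≤ a} : Finset ι) = S ∪ ({i | i ∉ S ∧ x i ≤ a} : Finset ι) := by
    ext i
    by_cases hi : i ∈ S <;> simp [hi, hS]
  rw [card_filter_subtype (· ∉ S) (x · ≤ a), hsplit,
    card_union_of_disjoint (disjoint_left.2 fun _ hi hi' => (mem_filter.1 hi').2.1 hi)]

section Decomposition

variable (ν : Measure ℝ) [SigmaFinite ν] {m k : ℕ} {t : ℕ → ℝ}

lemma pi_setOf_card_filter_le_congr {ι κ : Type*} [Fintype ι] [Fintype κ] (e : ι ≃ κ)
    (P : (ℝ → ℕ) → Prop) :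
    Measure.pi (fun _ : ι => ν) {z | P fun a => #{i | z i ≤ a}}
      = Measure.pi (fun _ : κ => ν) {z | P fun a => #{i | z i ≤ a}} := by
  rw [← (measurePreserving_piCongrLeft (fun _ : κ => ν) e).measure_preimage_equiv]
  have hcount (z : ι → ℝ) (a : ℝ) :
      #{j | MeasurableEquiv.piCongrLeft (fun _ => ℝ) e z j ≤ a} = #{i | z i ≤ a} :=
    (card_equiv e fun i => by simp [MeasurableEquiv.coe_piCongrLeft]).symm
  congr 1
  ext z
  simp only [Set.mem_preimage, Set.mem_ofPred_eq, hcount]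

lemma setOf_kSUf_eq_biUnion (hkm : k ≤ m) (ht : MonotoneOn t (Set.Icc k m)) :
    {x : Fin m → ℝ | kSUf m t x = k} = ⋃ S ∈ powersetCard k univ,
      {x | ({i | x i ≤ t k} : Finset (Fin m)) = S ∧ ∀ j, k < j → j ≤ m → #{i | x i ≤ t j} < j} := by
  ext x
  simp only [Set.mem_ofPred_eq, Set.mem_iUnion, mem_powersetCard, kSUf_eq_iff hkm ht, exists_prop]
  constructor
  · rintro ⟨hk, htail⟩
    exact ⟨_, ⟨subset_univ _, hk⟩, rfl, htail⟩
  · rintro ⟨S, ⟨-, hS⟩, rfl, htail⟩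
    exact ⟨hS, htail⟩

lemma setOf_filter_eq_and_tail_eq_preimage (hkm : k ≤ m) (ht : MonotoneOn t (Set.Icc k m))
    {S : Finset (Fin m)} (hS : #S = k) :
    {x : Fin m → ℝ | ({i | x i ≤ t k} : Finset (Fin m)) = S ∧
        ∀ j, k < j → j ≤ m → #{i | x i ≤ t j} < j}
      = MeasurableEquiv.piEquivPiSubtypeProd (fun _ => ℝ) (· ∈ S) ⁻¹'
          (Set.univ.pi (fun _ => Set.Iic (t k)) ×ˢ
            {z | ∀ j, k < j → j ≤ m → #{i | z i ≤ t j} + k < j}) := by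
  have htk (j : ℕ) (hkj : k < j) (hjm : j ≤ m) : t k ≤ t j :=
    ht ⟨le_rfl, hkm⟩ ⟨hkj.le, hjm⟩ hkj.le
  ext x
  simp only [Set.mem_preimage, Set.mem_prod, Set.mem_pi, Set.mem_univ, true_implies,
    Set.mem_Iic, Set.mem_ofPred_eq, MeasurableEquiv.piEquivPiSubtypeProd, MeasurableEquiv.coe_mk,
    Equiv.piEquivPiSubtypeProd_apply]
  constructor
  · rintro ⟨hS, htail⟩
    have hle (i : Fin m) (hi : i ∈ S) : x i ≤ t k := by
      rw [← hS] at hi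
      exact (mem_filter.1 hi).2
    refine ⟨fun i => hle i i.2, fun j hkj hjm => ?_⟩
    have := card_filter_le_eq_card_add fun i hi => (hle i hi).trans (htk j hkj hjm)
    have := htail j hkj hjm
    omega
  · rintro ⟨hle, htail⟩
    have hle' (i : Fin m) (hi : i ∈ S) : x i ≤ t k := hle ⟨i, hi⟩
    refine ⟨?_, fun j hkj hjm => ?_⟩
    · ext i
      refine ⟨fun hi => by_contra fun hiS => ?_, fun hi => mem_filter.2 ⟨mem_univ _, hle' i hi⟩⟩
      -- an index outside `S` below `t k` already violates the condition at `j = k + 1`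
      rcases hkm.lt_or_eq with hkm | rfl
      · have hi' : (⟨i, hiS⟩ : {i // i ∉ S}) ∈ ({i | x i ≤ t (k + 1)} : Finset {i // i ∉ S}) :=
          mem_filter.2 ⟨mem_univ _, (mem_filter.1 hi).2.trans (htk _ k.lt_succ_self hkm)⟩
        have := card_pos.2 ⟨_, hi'⟩
        have := htail (k + 1) k.lt_succ_self hkm
        omega
      · exact hiS (eq_univ_of_card S (hS.trans (card_fin _).symm) ▸ mem_univ i)
    · have := card_filter_le_eq_card_add fun i hi => (hle' i hi).trans (htk j hkj hjm)
      have := htail j hkj hjm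
      omega

lemma pi_setOf_filter_eq_and_tail (hkm : k ≤ m) (ht : MonotoneOn t (Set.Icc k m))
    {S : Finset (Fin m)} (hS : #S = k) :
    Measure.pi (fun _ => ν) {x : Fin m → ℝ | ({i | x i ≤ t k} : Finset (Fin m)) = S ∧
        ∀ j, k < j → j ≤ m → #{i | x i ≤ t j} < j}
      = ν (Set.Iic (t k)) ^ k * Measure.pi (fun _ : Fin (m - k) => ν)
          {z | ∀ j, k < j → j ≤ m → #{i | z i ≤ t j} + k < j} := by
  have hSc : Fintype.card {i // i ∉ S} = m - k := by
    simp [Fintype.card_subtype_compl, hS]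
  rw [setOf_filter_eq_and_tail_eq_preimage hkm ht hS,
    (measurePreserving_piEquivPiSubtypeProd (fun _ => ν) (· ∈ S)).measure_preimage_equiv,
    Measure.prod_prod]
  congr 1
  · simp only [Measure.pi_pi, prod_const, card_univ]
    simp [hS]
  · exact pi_setOf_card_filter_le_congr ν (Fintype.equivFinOfCardEq hSc)
      fun N => ∀ j, k < j → j ≤ m → N (t j) + k < j

theorem pi_kSUf_eq (hkm : k ≤ m) (ht : MonotoneOn t (Set.Icc k m)) :
    Measure.pi (fun _ => ν) {x : Fin m → ℝ | kSUf m t x = k}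
      = m.choose k * ν (Set.Iic (t k)) ^ k * Measure.pi (fun _ : Fin (m - k) => ν)
          {z | ∀ j, k < j → j ≤ m → #{i | z i ≤ t j} + k < j} := by
  have hdisj : Set.PairwiseDisjoint ↑(powersetCard k (univ : Finset (Fin m)))
      fun S => {x : Fin m → ℝ | ({i | x i ≤ t k} : Finset (Fin m)) = S ∧
        ∀ j, k < j → j ≤ m → #{i | x i ≤ t j} < j} :=
    fun S _ T _ hST => Set.disjoint_left.2 fun x hS hT => hST (hS.1.symm.trans hT.1)
  have hmeas (S : Finset (Fin m)) : MeasurableSet {x : Fin m → ℝ |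
      ({i | x i ≤ t k} : Finset (Fin m)) = S ∧ ∀ j, k < j → j ≤ m → #{i | x i ≤ t j} < j} := by
    refine .inter ?_ (measurableSet_forall_card_filter_le t fun j n => k < j → j ≤ m → n < j)
    simp only [Finset.ext_iff, mem_filter, mem_univ, true_and]
    refine measurableSet_setOfPred.2 (Measurable.forall fun i => .iff ?_ measurable_const)
    exact measurableSet_setOfPred.1 (measurableSet_le (measurable_pi_apply i) measurable_const)
  rw [setOf_kSUf_eq_biUnion hkm ht, measure_biUnion_finset hdisj fun S _ => hmeas S,
    sum_congr rfl fun S hS => pi_setOf_filter_eq_and_tail ν hkm ht (mem_powersetCard.1 hS).2,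
    sum_const, card_powersetCard, card_univ, Fintype.card_fin, nsmul_eq_mul, mul_assoc]

end Decomposition

instance : IsProbabilityMeasure unifM :=
  ⟨by simp [unifM]⟩

instance : NullSingletonClass unifM := by
  unfold unifM
  infer_instance

lemma unifM_Iic {c : ℝ} (hc : c ∈ Set.Icc (0 : ℝ) 1) : unifM (Set.Iic c) = ENNReal.ofReal c := by
  have hinter : Set.Iic c ∩ Set.Icc 0 1 = Set.Icc 0 c :=
    Set.ext fun x => ⟨fun ⟨hxc, hx0, _⟩ => ⟨hx0, hxc⟩, fun ⟨hx0, hxc⟩ => ⟨hxc, hx0, hxc.trans hc.2⟩⟩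
  rw [unifM, Measure.restrict_congr_set Ioo_ae_eq_Icc, Measure.restrict_apply measurableSet_Iic,
    hinter, Real.volume_Icc, sub_zero]

lemma measurePreserving_one_sub_unifM : MeasurePreserving (fun x : ℝ => 1 - x) unifM unifM := by
  have h := (volume.measurePreserving_sub_left (1 : ℝ)).restrict_preimage
    (measurableSet_Ioo (a := (0 : ℝ)) (b := 1))
  rwa [Set.preimage_const_sub_Ioo, sub_zero, sub_self] at h

section CDF

variable {μ : Measure ℝ} [IsProbabilityMeasure μ]

lemma cdf_zero_of_ae_nonneg (h0 : ∀ᵐ x ∂μ, 0 ≤ x) (hc : Continuous (cdf μ)) : cdf μ 0 = 0 := by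
  have hneg (s : ℝ) (hs : s < 0) : cdf μ s = 0 := by
    rw [cdf_eq_real, measureReal_eq_zero_iff, measure_eq_zero_iff_ae_notMem]
    filter_upwards [h0] with x hx hxs using (hxs.trans_lt hs).not_ge hx
  have hlim := (hc.tendsto 0).mono_left (nhdsWithin_le_nhds (s := Set.Iio 0))
  exact le_antisymm
    (le_of_tendsto hlim (eventually_nhdsWithin_of_forall fun s hs => (hneg s hs).le))
    (cdf_nonneg μ 0)

lemma cdf_one_of_ae_le_one (h1 : ∀ᵐ x ∂μ, x ≤ 1) : cdf μ 1 = 1 := by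
  rw [cdf_eq_real, measureReal_def, (prob_compl_eq_zero_iff measurableSet_Iic).1 h1,
    ENNReal.toReal_one]

theorem measurePreserving_cdf (hsupp : ∀ᵐ x ∂μ, x ∈ Set.Icc 0 1) (hc : Continuous (cdf μ))
    (hm : StrictMonoOn (cdf μ) (Set.Icc 0 1)) : MeasurePreserving (cdf μ) μ unifM := by
  refine ⟨hc.measurable, Measure.ext_of_Iic _ _ fun c => ?_⟩
  rw [Measure.map_apply hc.measurable measurableSet_Iic]
  rcases lt_or_ge c 0 with hc0 | hc0
  · have hempty : cdf μ ⁻¹' Set.Iic c = ∅ :=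
      Set.eq_empty_of_forall_notMem fun x hx => hc0.not_ge ((cdf_nonneg μ x).trans hx)
    rw [hempty, measure_empty, eq_comm]
    refine measure_mono_null (Set.Iic_subset_Iic.2 hc0.le) ?_
    rw [unifM_Iic ⟨le_rfl, zero_le_one⟩, ENNReal.ofReal_zero]
  rcases le_or_gt c 1 with hc1 | hc1
  · have hrange : c ∈ Set.Icc (cdf μ 0) (cdf μ 1) := by
      rw [cdf_zero_of_ae_nonneg (hsupp.mono fun _ h => h.1) hc,
        cdf_one_of_ae_le_one (hsupp.mono fun _ h => h.2)]
      exact ⟨hc0, hc1⟩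
    obtain ⟨s, hs, rfl⟩ := intermediate_value_Icc zero_le_one hc.continuousOn hrange
    have hae : cdf μ ⁻¹' Set.Iic (cdf μ s) =ᵐ[μ] Set.Iic s := by
      filter_upwards [hsupp] with x hx using propext (hm.le_iff_le hx hs)
    rw [measure_congr hae, ← ofReal_cdf, unifM_Iic ⟨hc0, hc1⟩]
  · have huniv : cdf μ ⁻¹' Set.Iic c = Set.univ :=
      Set.eq_univ_of_forall fun x => (cdf_le_one μ x).trans hc1.le
    refine huniv ▸ measure_univ.trans (le_antisymm ?_ prob_le_one)
    calc 1 = unifM (Set.Iic 1) := by rw [unifM_Iic ⟨zero_le_one, le_rfl⟩, ENNReal.ofReal_one]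
      _ ≤ unifM (Set.Iic c) := measure_mono (Set.Iic_subset_Iic.2 hc1.le)

lemma ae_lt_iff_one_sub_cdf_le (hsupp : ∀ᵐ x ∂μ, x ∈ Set.Icc 0 1) (hc : Continuous (cdf μ))
    (hm : StrictMonoOn (cdf μ) (Set.Icc 0 1)) {s : ℝ} (hs : s ∈ Set.Icc (0 : ℝ) 1) :
    ∀ᵐ x ∂μ, s < x ↔ 1 - cdf μ x ≤ 1 - cdf μ s := by
  have hne : ∀ᵐ x ∂μ, cdf μ x ≠ cdf μ s :=
    (measurePreserving_cdf hsupp hc hm).quasiMeasurePreserving.ae (Measure.ae_ne unifM _)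
  filter_upwards [hsupp, hne] with x hx hxs
  rw [sub_le_sub_iff_left, ← hm.lt_iff_lt hs hx]
  exact ⟨le_of_lt, fun h => h.lt_of_ne' hxs⟩

end CDF

lemma setOf_tail_eq_setOf_le_card_filter_lt {m k : ℕ} (t : ℕ → ℝ) :
    {z : Fin (m - k) → ℝ | ∀ j, k < j → j ≤ m → #{i | z i ≤ t j} + k < j}
      = {z | ∀ j ∈ Icc 1 (m - k), j ≤ #{i | t (m + 1 - j) < z i}} := by
  ext z
  have hcompl (a : ℝ) : #{i | z i ≤ a} + #{i | a < z i} = m - k := by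
    simpa [not_le] using card_filter_add_card_filter_not (s := univ) fun i => z i ≤ a
  simp only [Set.mem_ofPred_eq, mem_Icc]
  constructor
  · intro h j hj
    have := h (m + 1 - j) (by omega) (by omega)
    have := hcompl (t (m + 1 - j))
    omega
  · intro h j hkj hjm
    have := h (m + 1 - j) (by omega)
    rw [show m + 1 - (m + 1 - j) = j by omega] at this
    have := hcompl (t j)
    omega

lemma pi_setOf_card_filter_congr_of_ae {ι : Type*} [Fintype ι] {μ ν : Measure ℝ}
    [SigmaFinite μ] [SigmaFinite ν] {f : ℝ → ℝ} (hf : MeasurePreserving f μ ν) {J : Finset ℕ}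
    {s c : ℕ → ℝ} (hsc : ∀ j ∈ J, ∀ᵐ x ∂μ, s j < x ↔ f x ≤ c j) (P : ℕ → ℕ → Prop) :
    Measure.pi (fun _ : ι => μ) {z | ∀ j ∈ J, P j #{i | s j < z i}}
      = Measure.pi (fun _ : ι => ν) {y | ∀ j ∈ J, P j #{i | y i ≤ c j}} := by
  have hF : MeasurePreserving (fun z : ι → ℝ => fun i => f (z i))
      (Measure.pi fun _ => μ) (Measure.pi fun _ => ν) :=
    measurePreserving_pi _ _ fun _ => hf
  rw [← hF.measure_preimage
    (measurableSet_forall_card_filter_le c fun j n => j ∈ J → P j n).nullMeasurableSet]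
  have hae : ∀ᵐ z ∂Measure.pi (fun _ : ι => μ), ∀ i, ∀ j ∈ J, s j < z i ↔ f (z i) ≤ c j :=
    ae_all_iff.2 fun i => (Measure.tendsto_eval_ae_ae (i := i)).eventually
      (p := fun x => ∀ j ∈ J, s j < x ↔ f x ≤ c j) ((Filter.eventually_all_finset J).2 hsc)
  refine measure_congr ?_
  filter_upwards [hae] with z hz
  refine propext (forall₂_congr fun j hj => ?_)
  rw [filter_congr fun i _ => hz i j hj]

/-- Distribution of the step-up rejection number for i.i.d. p-values with continuous
increasing c.d.f. `G`:
`P(|SU(t)| = k) = C(m,k)(G(t_k))^k Ψ_{m-k}(1-G(t_m), ..., 1-G(t_{k+1}))`,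
the `j`-th (1-indexed) argument of `Ψ_{m-k}` being `1 - G(t_{m+1-j})`. -/
theorem stepup_rejection_distribution (m : ℕ)
    (μG : Measure ℝ) [IsProbabilityMeasure μG] (hsupp : μG (Set.Icc 0 1) = 1)
    (G : ℝ → ℝ) (hG : ∀ s, G s = (μG (Set.Iic s)).toReal)
    (hGc : Continuous G) (hGm : StrictMonoOn G (Set.Icc 0 1))
    (t : ℕ → ℝ) (ht0 : t 0 = 0) (ht : MonotoneOn t (Set.Icc 1 m))
    (ht01 : ∀ j ∈ Set.Icc 1 m, t j ∈ Set.Icc (0:ℝ) 1)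
    (k : ℕ) (hkm : k ≤ m) :
    ((Measure.pi fun _ : Fin m => μG) {x | (rejSUf m t x).card = k}).toReal
      = (m.choose k : ℝ) * (G (t k)) ^ k
          * Psi (m - k) (fun j => 1 - G (t (m + 1 - j))) := by
  obtain rfl : G = cdf μG := funext fun s => by rw [hG, cdf_eq_real, measureReal_def]
  have hsupp_ae : ∀ᵐ x ∂μG, x ∈ Set.Icc 0 1 := (prob_compl_eq_zero_iff measurableSet_Icc).2 hsupp
  have htm : MonotoneOn t (Set.Icc 0 m) := monotoneOn_Icc_zero ht fun j hj => ht0 ▸ (ht01 j hj).1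
  have hs (j : ℕ) (hj : j ∈ Icc 1 (m - k)) : t (m + 1 - j) ∈ Set.Icc (0 : ℝ) 1 := by
    rw [mem_Icc] at hj
    exact ht01 _ ⟨by omega, by omega⟩
  simp_rw [card_rejSUf htm]
  rw [pi_kSUf_eq μG hkm (htm.mono (Set.Icc_subset_Icc (Nat.zero_le k) le_rfl)),
    setOf_tail_eq_setOf_le_card_filter_lt,
    pi_setOf_card_filter_congr_of_ae
      (measurePreserving_one_sub_unifM.comp (measurePreserving_cdf hsupp_ae hGc hGm))
      (fun j hj => ae_lt_iff_one_sub_cdf_le hsupp_ae hGc hGm (hs j hj)) fun j n => j ≤ n,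
    ← ofReal_cdf]
  simp [Psi, iidUnif, ENNReal.toReal_mul, cdf_nonneg]
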